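/- arXiv:1711.02640 — 5 statements merged into one kernel-verified Lean document; each statement's English description precedes it below -/
import Mathlib

section
/- Let R be an EZ-category and X a presheaf on R. If X is n-coskeletal (the unit X → cosk_n X is an isomorphism), then for every object r with d(r) > n and every morphism ∂R[r] → X from the boundary of the representable presheaf, there exists a unique extension R[r] → X along the boundary inclusion ∂R[r] → R[r]; and conversely this unique-filler property implies X is n-coskeletal, given that ∂R[r] = sk_{d(r)−1} R[r]. -/
open CategoryTheory CategoryTheory.Limits CategoryTheory.GrothendieckTopology Opposite

/-- An EZ-category structure (Eilenberg–Zilber category) on a small category `R`. -/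
structure EZStruct (R : Type) [SmallCategory R] where
  deg : R → ℕ
  mono_iso_iff : ∀ {a b : R} (f : a ⟶ b), Mono f → (deg a = deg b ↔ IsIso f)
  mono_raises_iff : ∀ {a b : R} (f : a ⟶ b), Mono f → (deg a < deg b ↔ ¬ IsIso f)
  factor : ∀ {a c : R} (f : a ⟶ c),
    ∃ (b : R) (h : a ⟶ b) (g : b ⟶ c), IsSplitEpi h ∧ Mono g ∧ h ≫ g = f
  absPushout : ∀ {a b c : R} (p : a ⟶ b) (q : a ⟶ c), IsSplitEpi p → IsSplitEpi q →
    ∃ (d : R) (f : b ⟶ d) (g : c ⟶ d), p ≫ f = q ≫ g ∧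
      IsPushout (yoneda.map p) (yoneda.map q) (yoneda.map f) (yoneda.map g)

/-- The boundary `∂R[r] ⊆ R[r]`: the subpresheaf of the representable presheaf consisting of
those elements which factor through a non-invertible monomorphism (face operator) into `r`. -/
def ezBoundary {R : Type} [SmallCategory R] (r : R) : Subfunctor (yoneda.obj r) where
  obj s := {u : (yoneda.obj r).obj s |
    ∃ (b : R) (m : b ⟶ r) (h : s.unop ⟶ b), Mono m ∧ ¬ IsIso m ∧ h ≫ m = u}
  map := by
    rintro s t i u ⟨b, m, h, hm, hi, he⟩
    exact ⟨b, m, i.unop ≫ h, hm, hi, by rw [Category.assoc, he]; rfl⟩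

/-! Write `RestrictionBijective P A X` when restriction `(A ⟶ X) → (A|_P ⟶ X|_P)` to the full
subcategory `P` is bijective. By the adjunction and Yoneda, `X` is `n`-coskeletal iff this holds
for every representable at `P = {d ≤ n}`; since `∂R[r] ≅ L (R[r]|_{d ≤ d r - 1})` over `R[r]`,
the unique filler property at `r` says the same for `R[r]` at `{d ≤ d r - 1}`.
If `P ≤ Q` and every representable of `Q` is `P`-bijective, a map `A|_Q ⟶ X|_Q` is determined by,
and can be glued from, its restriction to `P`, so `P`- and `Q`-bijectivity agree. With
`P = {d ≤ n}` and `Q = {d ≤ d r - 1}` this gives the forward direction at once and the converse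
by induction on the degree. -/

universe u v

namespace PresheafTruncation

variable {R : Type u} [Category.{v} R]

abbrev restrict (P : ObjectProperty R) :
    (Rᵒᵖ ⥤ Type v) ⥤ (P.FullSubcategoryᵒᵖ ⥤ Type v) :=
  (Functor.whiskeringLeft P.FullSubcategoryᵒᵖ Rᵒᵖ (Type v)).obj P.ι.op

abbrev restrictOfLE {P Q : ObjectProperty R} (h : P ≤ Q) :
    (Q.FullSubcategoryᵒᵖ ⥤ Type v) ⥤ (P.FullSubcategoryᵒᵖ ⥤ Type v) :=
  (Functor.whiskeringLeft P.FullSubcategoryᵒᵖ Q.FullSubcategoryᵒᵖ (Type v)).obj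
    (ObjectProperty.ιOfLE h).op

def RestrictionBijective (P : ObjectProperty R) (A X : Rᵒᵖ ⥤ Type v) : Prop :=
  Function.Bijective fun f : A ⟶ X => (restrict P).map f

variable {P Q : ObjectProperty R} {A X : Rᵒᵖ ⥤ Type v}

lemma restrict_map_eq_restrictOfLE_map (h : P ≤ Q) :
    (fun f : A ⟶ X => (restrict P).map f) =
      (fun w => (restrictOfLE h).map w) ∘ fun f : A ⟶ X => (restrict Q).map f :=
  rfl

lemma restrict_naturality (w : (restrict P).obj A ⟶ (restrict P).obj X) {t s : R}
    (ht : P t) (hs : P s) (g : t ⟶ s) (a : A.obj (op s)) :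
    w.app (op ⟨t, ht⟩) (A.map g.op a) = X.map g.op (w.app (op ⟨s, hs⟩) a) :=
  types_congr_hom (w.naturality
    (show (⟨t, ht⟩ : P.FullSubcategory) ⟶ ⟨s, hs⟩ from ObjectProperty.homMk g).op) a

lemma natTrans_ext {F G : P.FullSubcategoryᵒᵖ ⥤ Type v} {w w' : F ⟶ G}
    (h : ∀ t (ht : P t) a, w.app (op ⟨t, ht⟩) a = w'.app (op ⟨t, ht⟩) a) : w = w' := by
  ext ⟨⟨t, ht⟩⟩ a
  exact h t ht a

lemma restrict_map_yonedaEquiv_symm_app {s t : R} (ht : P t) (x : X.obj (op s)) (g : t ⟶ s) :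
    ((restrict P).map (yonedaEquiv.symm x)).app (op ⟨t, ht⟩) g = X.map g.op x :=
  rfl

lemma restrictionBijective_yoneda {s : R} (hs : P s) :
    RestrictionBijective P (yoneda.obj s) X := by
  refine ⟨fun f f' h => ?_, fun w => ⟨yonedaEquiv.symm (w.app (op ⟨s, hs⟩) (𝟙 s)), ?_⟩⟩
  · apply yonedaEquiv.injective
    exact types_congr_hom (congrArg (fun w => NatTrans.app w (op ⟨s, hs⟩)) h) (𝟙 s)
  · refine natTrans_ext fun t ht g => ?_
    rw [restrict_map_yonedaEquiv_symm_app, ← restrict_naturality w ht hs]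
    simp

namespace RestrictionBijective

variable {s : R}

lemma ext (hX : RestrictionBijective P (yoneda.obj s) X) {x x' : X.obj (op s)}
    (h : ∀ t, P t → ∀ g : t ⟶ s, X.map g.op x = X.map g.op x') : x = x' := by
  apply yonedaEquiv.symm.injective
  exact hX.1 (natTrans_ext fun t ht g => h t ht g)

lemma exists_extension (hX : RestrictionBijective P (yoneda.obj s) X)
    (φ : (restrict P).obj (yoneda.obj s) ⟶ (restrict P).obj X) :
    ∃ x : X.obj (op s), ∀ t (ht : P t) (g : t ⟶ s), X.map g.op x = φ.app (op ⟨t, ht⟩) g := by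
  obtain ⟨f, rfl⟩ := hX.2 φ
  refine ⟨yonedaEquiv f, fun t ht g => ?_⟩
  rw [← restrict_map_yonedaEquiv_symm_app ht, Equiv.symm_apply_apply]

end RestrictionBijective

lemma restrictOfLE_map_bijective (h : P ≤ Q)
    (hX : ∀ s, Q s → RestrictionBijective P (yoneda.obj s) X) :
    Function.Bijective fun w : (restrict Q).obj A ⟶ (restrict Q).obj X =>
      (restrictOfLE h).map w := by
  constructor
  · intro w w' hw
    refine natTrans_ext fun s hs a => (hX s hs).ext fun t ht g => ?_
    rw [← restrict_naturality w (h t ht) hs, ← restrict_naturality w' (h t ht) hs]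
    exact types_congr_hom (congrArg (fun w => NatTrans.app w (op ⟨t, ht⟩)) hw) (A.map g.op a)
  · intro u
    choose x hx using fun (s : Q.FullSubcategoryᵒᵖ) (a : A.obj (op s.unop.obj)) =>
      (hX s.unop.obj s.unop.property).exists_extension ((restrict P).map (yonedaEquiv.symm a) ≫ u)
    refine ⟨{ app := fun s => TypeCat.ofHom (x s), naturality := ?_ }, ?_⟩
    · rintro ⟨⟨s, hs⟩⟩ ⟨⟨s', hs'⟩⟩ ⟨g⟩
      ext a
      change x (op ⟨s', hs'⟩) (A.map g.hom.op a) = X.map g.hom.op (x (op ⟨s, hs⟩) a)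
      refine (hX s' hs').ext fun t ht f => ?_
      have h1 := hx (op ⟨s', hs'⟩) (A.map g.hom.op a) t ht f
      have h2 := hx (op ⟨s, hs⟩) a t ht (f ≫ g.hom)
      simp only [NatTrans.comp_app_apply, restrict_map_yonedaEquiv_symm_app] at h1 h2
      rw [h1, ← Functor.map_comp_apply A, ← op_comp, ← h2, op_comp, Functor.map_comp_apply]
    · refine natTrans_ext fun t ht a => ?_
      have := hx (op ⟨t, h t ht⟩) a t ht (𝟙 t)
      simp only [NatTrans.comp_app_apply, restrict_map_yonedaEquiv_symm_app, op_id,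
        Functor.map_id_apply] at this
      exact this

lemma restrictionBijective_iff_of_le (h : P ≤ Q)
    (hX : ∀ s, Q s → RestrictionBijective P (yoneda.obj s) X) :
    RestrictionBijective P A X ↔ RestrictionBijective Q A X := by
  rw [RestrictionBijective, restrict_map_eq_restrictOfLE_map h]
  exact (restrictOfLE_map_bijective h hX).of_comp_iff' _

lemma restrictionBijective_yoneda_of_forall_lt (d : R → ℕ) (n : ℕ)
    (H : ∀ r, n < d r → RestrictionBijective (fun x => d x ≤ d r - 1) (yoneda.obj r) X) (s : R) :
    RestrictionBijective (fun x => d x ≤ n) (yoneda.obj s) X := by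
  induction hk : d s using Nat.strong_induction_on generalizing s with
  | _ k ih =>
    by_cases hs : d s ≤ n
    · exact restrictionBijective_yoneda hs
    have hle : (fun x => d x ≤ n : ObjectProperty R) ≤ fun x => d x ≤ d s - 1 :=
      fun x hx => by omega
    refine (restrictionBijective_iff_of_le hle (fun t ht => ?_)).mpr (H s (by omega))
    exact ih (d t) (by omega) t rfl

lemma restrict_map_eq_homEquiv_symm {G : (P.FullSubcategoryᵒᵖ ⥤ Type v) ⥤ (Rᵒᵖ ⥤ Type v)}
    (adj : restrict P ⊣ G) (f : A ⟶ X) :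
    (restrict P).map f = (adj.homEquiv A ((restrict P).obj X)).symm (f ≫ adj.unit.app X) := by
  rw [Equiv.eq_symm_apply, Adjunction.homEquiv_unit, Adjunction.unit_naturality]

lemma restrictionBijective_yoneda_iff {G : (P.FullSubcategoryᵒᵖ ⥤ Type v) ⥤ (Rᵒᵖ ⥤ Type v)}
    (adj : restrict P ⊣ G) (X : Rᵒᵖ ⥤ Type v) (s : R) :
    RestrictionBijective P (yoneda.obj s) X ↔ Function.Bijective ((adj.unit.app X).app (op s)) := by
  have hcomp : (fun f : yoneda.obj s ⟶ X => (restrict P).map f) =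
      (adj.homEquiv _ _).symm ∘ yonedaEquiv.symm ∘ (adj.unit.app X).app (op s) ∘ yonedaEquiv := by
    funext f
    simp only [Function.comp_apply, restrict_map_eq_homEquiv_symm adj,
      ← CategoryTheory.yonedaEquiv_comp, Equiv.symm_apply_apply]
  rw [RestrictionBijective, hcomp, Equiv.comp_bijective, Equiv.comp_bijective,
    Equiv.bijective_comp]

lemma isIso_unit_app_iff {G : (P.FullSubcategoryᵒᵖ ⥤ Type v) ⥤ (Rᵒᵖ ⥤ Type v)}
    (adj : restrict P ⊣ G) (X : Rᵒᵖ ⥤ Type v) :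
    IsIso (adj.unit.app X) ↔ ∀ s, RestrictionBijective P (yoneda.obj s) X := by
  simp only [NatTrans.isIso_iff_isIso_app, isIso_iff_bijective,
    restrictionBijective_yoneda_iff adj, op_surjective.forall]

lemma existsUnique_extension_iff {L : (P.FullSubcategoryᵒᵖ ⥤ Type v) ⥤ (Rᵒᵖ ⥤ Type v)}
    (adj : L ⊣ restrict P) {B : Rᵒᵖ ⥤ Type v} (i : B ⟶ A)
    (e : B ≅ L.obj ((restrict P).obj A)) (he : e.hom ≫ adj.counit.app A = i) :
    (∀ u : B ⟶ X, ∃! f : A ⟶ X, i ≫ f = u) ↔ RestrictionBijective P A X := by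
  have hcomp : (fun f : A ⟶ X => i ≫ f) =
      e.homFromEquiv.symm ∘ (adj.homEquiv _ X).symm ∘ fun f => (restrict P).map f := by
    funext f
    simp only [Function.comp_apply, Iso.homFromEquiv_symm_apply, Adjunction.homEquiv_counit,
      adj.counit_naturality, ← he, Category.assoc]
  rw [← Function.bijective_iff_existsUnique (fun f : A ⟶ X => i ≫ f), hcomp,
    Equiv.comp_bijective, Equiv.comp_bijective, RestrictionBijective]

end PresheafTruncation

open PresheafTruncation in
/-- For an EZ-category `R` and a presheaf `X` on `R`: `X` is `n`-coskeletal (the unit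
`X ⟶ cosk_n X` of the adjunction `t_n^* ⊣ t_{n*}` is an isomorphism) if and only if for every
object `r` with `d(r) > n` every morphism `∂R[r] ⟶ X` admits a unique filler `R[r] ⟶ X`,
given that `∂R[r] = sk_{d(r)-1} R[r]` (hypothesis `hbd`). -/
theorem stmt_5 {R : Type} [SmallCategory R] (E : EZStruct R) (n : ℕ)
    (L : ∀ m : ℕ, ((ObjectProperty.FullSubcategory fun r : R => E.deg r ≤ m)ᵒᵖ ⥤ Type) ⥤ (Rᵒᵖ ⥤ Type))
    (adjL : ∀ m : ℕ, L m ⊣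
      (Functor.whiskeringLeft (ObjectProperty.FullSubcategory fun r : R => E.deg r ≤ m)ᵒᵖ Rᵒᵖ Type).obj
        (ObjectProperty.ι fun r : R => E.deg r ≤ m).op)
    (Rst : ((ObjectProperty.FullSubcategory fun r : R => E.deg r ≤ n)ᵒᵖ ⥤ Type) ⥤ (Rᵒᵖ ⥤ Type))
    (adjR : ((Functor.whiskeringLeft (ObjectProperty.FullSubcategory fun r : R => E.deg r ≤ n)ᵒᵖ Rᵒᵖ Type).obj
      (ObjectProperty.ι fun r : R => E.deg r ≤ n).op) ⊣ Rst)
    (hbd : ∀ r : R,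
      ∃ e : (ezBoundary r).toFunctor ≅ (L (E.deg r - 1)).obj
        (((Functor.whiskeringLeft (ObjectProperty.FullSubcategory fun x : R => E.deg x ≤ E.deg r - 1)ᵒᵖ Rᵒᵖ Type).obj
          (ObjectProperty.ι fun x : R => E.deg x ≤ E.deg r - 1).op).obj (yoneda.obj r)),
        e.hom ≫ (adjL (E.deg r - 1)).counit.app (yoneda.obj r) = (ezBoundary r).ι)
    (X : Rᵒᵖ ⥤ Type) :
    IsIso (adjR.unit.app X) ↔
      ∀ r : R, n < E.deg r → ∀ u : (ezBoundary r).toFunctor ⟶ X,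
        ∃! v : yoneda.obj r ⟶ X, (ezBoundary r).ι ≫ v = u := by
  have hfill (r : R) : (∀ u : (ezBoundary r).toFunctor ⟶ X,
      ∃! v : yoneda.obj r ⟶ X, (ezBoundary r).ι ≫ v = u) ↔
      RestrictionBijective (fun x => E.deg x ≤ E.deg r - 1) (yoneda.obj r) X := by
    obtain ⟨e, he⟩ := hbd r
    exact existsUnique_extension_iff (adjL _) _ e he
  rw [isIso_unit_app_iff adjR]
  refine ⟨fun H r hr => (hfill r).mpr ?_, fun H => ?_⟩
  · exact (restrictionBijective_iff_of_le (fun x hx => by omega) (fun s _ => H s)).mp (H r)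
  · exact restrictionBijective_yoneda_of_forall_lt E.deg n fun r hr => (hfill r).mp (H r hr)
end

section
/- In a model category candidate where (i) every map factors as a cofibration followed by a map having the right lifting property with respect to all cofibrations, (ii) every map with the RLP against all cofibrations is a weak equivalence, and (iii) weak equivalences satisfy two-out-of-three, every trivial fibration (map that is both a fibration and a weak equivalence) has the right lifting property with respect to all cofibrations. (Retract/lifting argument used in the proof of the model structure on augmented presheaves.) -/
open CategoryTheory

/-- Retract/lifting argument: in a candidate model structure where (i) every map factors as a
cofibration followed by a map with the RLP against all cofibrations, (ii) every map with the
RLP against all cofibrations is a weak equivalence, and (iii) weak equivalences satisfy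
two-out-of-three, every trivial fibration (a fibration, i.e. a map with the RLP against all
trivial cofibrations, which is also a weak equivalence) has the RLP with respect to all
cofibrations. -/
theorem stmt_10 {C : Type*} [Category C] (W Cof : MorphismProperty C)
    (fact : ∀ {X Y : C} (p : X ⟶ Y), ∃ (Z : C) (j : X ⟶ Z) (q : Z ⟶ Y),
      Cof j ∧ (∀ {A B : C} (i : A ⟶ B), Cof i → HasLiftingProperty i q) ∧ j ≫ q = p)
    (rlp_weq : ∀ {X Y : C} (q : X ⟶ Y),
      (∀ {A B : C} (i : A ⟶ B), Cof i → HasLiftingProperty i q) → W q)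
    (two_three : W.HasTwoOutOfThreeProperty)
    {X Y : C} (p : X ⟶ Y) (hpW : W p)
    (hpFib : ∀ {A B : C} (i : A ⟶ B), Cof i → W i → HasLiftingProperty i p)
    {A B : C} (i : A ⟶ B) (hi : Cof i) :
    HasLiftingProperty i p := by
  obtain ⟨Z, j, q, hj, hq, hjq⟩ := fact p
  have hWq : W q := rlp_weq q hq
  have hWj : W j := two_three.of_postcomp j q hWq (hjq ▸ hpW)
  have hjp : HasLiftingProperty j p := hpFib j hj hWj
  have sq : CommSq (𝟙 X) j p q := ⟨by simp [hjq]⟩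
  obtain ⟨⟨r, hr1, hr2⟩⟩ := hjp.sq_hasLift sq
  constructor
  intro f g sq2
  have hiq : HasLiftingProperty i q := hq i hi
  have sq3 : CommSq (f ≫ j) i q g := ⟨by rw [Category.assoc, hjq, sq2.w]⟩
  obtain ⟨⟨l, hl1, hl2⟩⟩ := hiq.sq_hasLift sq3
  exact ⟨⟨⟨l ≫ r, by rw [← Category.assoc, hl1, Category.assoc, hr1, Category.comp_id],
    by rw [Category.assoc, hr2, hl2]⟩⟩⟩
end

section
/- Let W be a full subcategory of X that is a sieve, and let W → Y be any embedding; form the pushout category Z = X ⊔_W Y in Cat. Then Ob(Z) = Ob(Y) ⊔ (Ob(X) \ Ob(W)), and every morphism of Z is either (1) a morphism of X not in W, or (2) a composite path X₀ → Y₁ → Y₂ → X₂ where the middle map is a morphism of Y and the outer maps are morphisms of X not in W or identities, with Y₁ ∈ W when the first outer map is non-trivial and Y₂ ∈ W when the second is non-trivial. -/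
open CategoryTheory

/-- A morphism lies in the image of a functor `H`. -/
def InImage {C D : Cat} (H : C ⟶ D) {d d' : ↑D} (φ : d ⟶ d') : Prop :=
  ∃ (c c' : ↑C) (ψ : c ⟶ c') (h : H.toFunctor.obj c = d) (h' : H.toFunctor.obj c' = d'),
    φ = eqToHom h.symm ≫ H.toFunctor.map ψ ≫ eqToHom h'

/-!
Build the pushout by hand: the category `Model` has objects `Ob(Y) ⊔ (Ob(X) \ Ob(W))`, and as
morphisms the morphisms of `Z` of the form `iY d`, `iX ψ`, or `iY d ≫ iX f` with `f` leaving `W`.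
Because `W` is a full sieve in `X`, these forms are closed under composition and `X`, `Y` map
compatibly into `Model`. The functor `Z ⥤ Model` given by the universal property is then a section
of the forgetful functor `Model ⥤ Z`, so the object map of `Model` is bijective and every morphism
of `Z` has one of the three forms.
-/

theorem CategoryTheory.IsPushout.desc_comp_eq_id {C : Type*} [Category C] {P X Y Z K : C}
    {f : P ⟶ X} {g : P ⟶ Y} {inl : X ⟶ Z} {inr : Y ⟶ Z} (h : IsPushout f g inl inr)
    {a : X ⟶ K} {b : Y ⟶ K} (w : f ≫ a = g ≫ b) {m : K ⟶ Z} (ha : a ≫ m = inl)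
    (hb : b ≫ m = inr) : h.desc a b w ≫ m = 𝟙 Z :=
  h.hom_ext (by simp [ha]) (by simp [hb])

namespace CategoryTheory.Cat

variable {W X Y Z : Cat} {F : W ⟶ X} {G : W ⟶ Y} {iX : X ⟶ Z} {iY : Y ⟶ Z}

theorem obj_eq_of_comp_eq (hw : F ≫ iX = G ≫ iY) (w : W) :
    iX.toFunctor.obj (F.toFunctor.obj w) = iY.toFunctor.obj (G.toFunctor.obj w) :=
  Functor.congr_obj (congrArg Hom.toFunctor hw) w

theorem map_eq_of_comp_eq (hw : F ≫ iX = G ≫ iY) {w w' : W} (χ : w ⟶ w') :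
    iX.toFunctor.map (F.toFunctor.map χ) = eqToHom (obj_eq_of_comp_eq hw w) ≫
      iY.toFunctor.map (G.toFunctor.map χ) ≫ eqToHom (obj_eq_of_comp_eq hw w').symm :=
  Functor.congr_hom (congrArg Hom.toFunctor hw) χ

end CategoryTheory.Cat

namespace SievePushout

universe v u

variable {W X Y Z : Cat.{v, u}}

structure IsFullSieve (F : W ⟶ X) : Prop where
  full : F.toFunctor.Full
  injective_obj : Function.Injective F.toFunctor.obj
  mem_range_of_hom {x : X} {w : W} : (x ⟶ F.toFunctor.obj w) → x ∈ Set.range F.toFunctor.obj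

theorem not_inImage_of_not_mem_range (F : W ⟶ X) {x x' : X} (ψ : x ⟶ x')
    (hx' : x' ∉ Set.range F.toFunctor.obj) : ¬ InImage F ψ := by
  rintro ⟨-, c', -, -, hc', -⟩
  exact hx' ⟨c', hc'⟩

/-- `G`, `iX` and `iY` only serve to let the category structure on `Model` depend on them. -/
def Model (F : W ⟶ X) (_G : W ⟶ Y) (_iX : X ⟶ Z) (_iY : Y ⟶ Z) : Type u :=
  Y ⊕ {x : X // x ∉ Set.range F.toFunctor.obj}

namespace Model

variable {F : W ⟶ X} {G : W ⟶ Y} {iX : X ⟶ Z} {iY : Y ⟶ Z}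

abbrev toObj : Model F G iX iY → Z
  | .inl y => iY.toFunctor.obj y
  | .inr x => iX.toFunctor.obj x.1

def IsHom : ∀ a b : Model F G iX iY, (toObj a ⟶ toObj b) → Prop
  | .inl y, .inl y' => fun g => ∃ e : y ⟶ y', g = iY.toFunctor.map e
  | .inl y, .inr x => fun g =>
      ∃ (w : W) (d : y ⟶ G.toFunctor.obj w) (f : F.toFunctor.obj w ⟶ x.1)
        (h : iY.toFunctor.obj (G.toFunctor.obj w) = iX.toFunctor.obj (F.toFunctor.obj w)),
        g = iY.toFunctor.map d ≫ eqToHom h ≫ iX.toFunctor.map f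
  -- a sieve admits no morphism from outside `W` into `W`
  | .inr _, .inl _ => fun _ => False
  | .inr x, .inr x' => fun g => ∃ ψ : x.1 ⟶ x'.1, g = iX.toFunctor.map ψ

theorem isHom_id : ∀ a : Model F G iX iY, IsHom a a (𝟙 _)
  | .inl y => ⟨𝟙 y, (iY.toFunctor.map_id y).symm⟩
  | .inr x => ⟨𝟙 x.1, (iX.toFunctor.map_id x.1).symm⟩

theorem IsHom.comp :
    ∀ {a b c : Model F G iX iY} {f : toObj a ⟶ toObj b} {g : toObj b ⟶ toObj c},
      IsHom a b f → IsHom b c g → IsHom a c (f ≫ g)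
  | .inl _, .inl _, .inl _, _, _, ⟨e, rfl⟩, ⟨e', rfl⟩ => ⟨e ≫ e', by simp⟩
  | .inl _, .inl _, .inr _, _, _, ⟨e, rfl⟩, ⟨w, d, f, h, rfl⟩ =>
      ⟨w, e ≫ d, f, h, by simp⟩
  | .inl _, .inr _, .inr _, _, _, ⟨w, d, f, h, rfl⟩, ⟨ψ, rfl⟩ =>
      ⟨w, d, f ≫ ψ, h, by simp⟩
  | .inr _, .inr _, .inr _, _, _, ⟨ψ, rfl⟩, ⟨ψ', rfl⟩ => ⟨ψ ≫ ψ', by simp⟩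
  | .inl _, .inr _, .inl _, _, _, _, hg => hg.elim
  | .inr _, .inr _, .inl _, _, _, _, hg => hg.elim
  | .inr _, .inl _, _, _, _, hf, _ => hf.elim

theorem IsHom.of_eq {a a' b b' : Model F G iX iY} (ha : a = a') (hb : b = b')
    {g : toObj a ⟶ toObj b} (hg : IsHom a b g) {g' : toObj a' ⟶ toObj b'}
    (h : g' = eqToHom (congrArg toObj ha).symm ≫ g ≫ eqToHom (congrArg toObj hb)) :
    IsHom a' b' g' := by
  subst ha hb
  simpa [h] using hg

instance : Category (Model F G iX iY) where
  Hom a b := {g : toObj a ⟶ toObj b // IsHom a b g}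
  id a := ⟨𝟙 _, isHom_id a⟩
  comp f g := ⟨f.1 ≫ g.1, f.2.comp g.2⟩

@[ext]
theorem hom_ext {a b : Model F G iX iY} {f g : a ⟶ b} (h : f.1 = g.1) : f = g :=
  Subtype.ext h

@[simp]
theorem id_val (a : Model F G iX iY) : (𝟙 a : a ⟶ a).1 = 𝟙 (toObj a) := rfl

@[simp]
theorem comp_val {a b c : Model F G iX iY} (f : a ⟶ b) (g : b ⟶ c) :
    (f ≫ g).1 = f.1 ≫ g.1 :=
  rfl

def forget : Model F G iX iY ⥤ Z where
  obj := toObj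
  map f := f.1

instance : forget.Faithful (C := Model F G iX iY) where
  map_injective := hom_ext

def fromY : Y ⥤ Model F G iX iY where
  obj := Sum.inl
  map e := ⟨iY.toFunctor.map e, e, rfl⟩

variable (F G iX iY) in
open Classical in
noncomputable def objOfX (x : X) : Model F G iX iY :=
  if h : x ∈ Set.range F.toFunctor.obj then .inl (G.toFunctor.obj h.choose) else .inr ⟨x, h⟩

theorem objOfX_of_not_mem_range {x : X} (hx : x ∉ Set.range F.toFunctor.obj) :
    objOfX F G iX iY x = .inr ⟨x, hx⟩ :=
  dif_neg hx

theorem objOfX_obj (hF : Function.Injective F.toFunctor.obj) (w : W) :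
    objOfX F G iX iY (F.toFunctor.obj w) = .inl (G.toFunctor.obj w) := by
  have hw : F.toFunctor.obj w ∈ Set.range F.toFunctor.obj := ⟨w, rfl⟩
  exact (dif_pos hw).trans (congrArg (Sum.inl ∘ G.toFunctor.obj) (hF hw.choose_spec))

theorem toObj_objOfX (hw : F ≫ iX = G ≫ iY) (hF : Function.Injective F.toFunctor.obj) (x : X) :
    toObj (objOfX F G iX iY x) = iX.toFunctor.obj x := by
  by_cases hx : x ∈ Set.range F.toFunctor.obj
  · obtain ⟨w, rfl⟩ := hx
    rw [objOfX_obj hF]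
    exact (Cat.obj_eq_of_comp_eq hw w).symm
  · rw [objOfX_of_not_mem_range hx]

theorem isHom_objOfX (hw : F ≫ iX = G ≫ iY) (hF : IsFullSieve F) {x x' : X} (ψ : x ⟶ x') :
    IsHom (objOfX F G iX iY x) (objOfX F G iX iY x')
      (eqToHom (toObj_objOfX hw hF.injective_obj x) ≫ iX.toFunctor.map ψ ≫
        eqToHom (toObj_objOfX hw hF.injective_obj x').symm) := by
  have := hF.full
  by_cases hx' : x' ∈ Set.range F.toFunctor.obj
  · obtain ⟨w', rfl⟩ := hx'
    obtain ⟨w, rfl⟩ := hF.mem_range_of_hom ψ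
    obtain ⟨χ, rfl⟩ := F.toFunctor.map_surjective ψ
    refine IsHom.of_eq (objOfX_obj hF.injective_obj w).symm
      (objOfX_obj hF.injective_obj w').symm ⟨G.toFunctor.map χ, rfl⟩ ?_
    simp [Cat.map_eq_of_comp_eq hw χ]
  by_cases hx : x ∈ Set.range F.toFunctor.obj
  · obtain ⟨w, rfl⟩ := hx
    refine IsHom.of_eq (objOfX_obj hF.injective_obj w).symm (objOfX_of_not_mem_range hx').symm
      ⟨w, 𝟙 _, ψ, (Cat.obj_eq_of_comp_eq hw w).symm, rfl⟩ ?_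
    simp
  · exact IsHom.of_eq (objOfX_of_not_mem_range hx).symm (objOfX_of_not_mem_range hx').symm
      ⟨ψ, rfl⟩ (by simp)

noncomputable def fromX (hw : F ≫ iX = G ≫ iY) (hF : IsFullSieve F) :
    X ⥤ Model F G iX iY where
  obj := objOfX F G iX iY
  map ψ := ⟨_, isHom_objOfX hw hF ψ⟩
  map_id _ := by ext; simp
  map_comp _ _ := by ext; simp

theorem comp_fromX_eq_comp_fromY (hw : F ≫ iX = G ≫ iY) (hF : IsFullSieve F) :
    F.toFunctor ⋙ fromX hw hF = G.toFunctor ⋙ fromY :=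
  CategoryTheory.Functor.ext (fun w => show (F.toFunctor ⋙ fromX hw hF).obj w = _ from
    objOfX_obj hF.injective_obj w) fun _ _ χ => by
    apply forget.map_injective
    simp only [Functor.map_comp, eqToHom_map]
    simp [forget, fromX, fromY, Cat.map_eq_of_comp_eq hw χ]

theorem fromX_comp_forget (hw : F ≫ iX = G ≫ iY) (hF : IsFullSieve F) :
    fromX hw hF ⋙ forget = iX.toFunctor :=
  CategoryTheory.Functor.ext (toObj_objOfX hw hF.injective_obj) fun _ _ _ => rfl

theorem fromY_comp_forget : fromY ⋙ (forget : Model F G iX iY ⥤ Z) = iY.toFunctor :=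
  rfl

theorem exists_section (hpo : IsPushout F G iX iY) (hF : IsFullSieve F) :
    ∃ L : Z ⥤ Model F G iX iY, L ⋙ forget = 𝟭 Z ∧ Function.LeftInverse L.obj toObj := by
  have hw := hpo.w
  have square : F ≫ (fromX hw hF).toCatHom = G ≫ fromY.toCatHom :=
    Cat.ext (comp_fromX_eq_comp_fromY hw hF)
  refine ⟨(hpo.desc _ _ square).toFunctor, congrArg Cat.Hom.toFunctor
    (hpo.desc_comp_eq_id square (Cat.ext (fromX_comp_forget hw hF)) (Cat.ext fromY_comp_forget)),
    ?_⟩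
  rintro (y | x)
  · exact Functor.congr_obj (congrArg Cat.Hom.toFunctor (hpo.inr_desc _ _ square)) y
  · exact (Functor.congr_obj (congrArg Cat.Hom.toFunctor (hpo.inl_desc _ _ square)) x.1).trans
      (objOfX_of_not_mem_range x.2)

theorem bijective_sumElim_obj (hpo : IsPushout F G iX iY) (hF : IsFullSieve F) :
    Function.Bijective (Sum.elim iY.toFunctor.obj
      (fun x : {x : X // x ∉ Set.range F.toFunctor.obj} => iX.toFunctor.obj x.1)) := by
  obtain ⟨L, hL, hLtoObj⟩ := exists_section (G := G) hpo hF
  have : Sum.elim iY.toFunctor.obj (fun x => iX.toFunctor.obj x.1) =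
      (toObj : Model F G iX iY → Z) := funext (Sum.rec (fun _ => rfl) fun _ => rfl)
  rw [this]
  exact ⟨hLtoObj.injective, Function.RightInverse.surjective (Functor.congr_obj hL)⟩

theorem exists_eq_forget_map (hpo : IsPushout F G iX iY) (hF : IsFullSieve F) {z z' : Z}
    (φ : z ⟶ z') :
    ∃ (a b : Model F G iX iY) (ha : toObj a = z) (hb : toObj b = z') (g : a ⟶ b),
      φ = eqToHom ha.symm ≫ g.1 ≫ eqToHom hb := by
  obtain ⟨L, hL, -⟩ := exists_section hpo hF
  exact ⟨_, _, Functor.congr_obj hL z, Functor.congr_obj hL z', L.map φ,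
    Functor.congr_hom hL.symm φ⟩

end Model

end SievePushout

/-- Fiore–Paoli structure of the pushout `Z = X ⊔_W Y` in `Cat` along a sieve `W ⊆ X`
(a full embedding closed under precomposition) and an embedding `W ⟶ Y`:
the objects of `Z` are `Ob(Y) ⊔ (Ob(X) \ Ob(W))`, and every morphism of `Z` is either a
morphism of `X` not in `W`, or a path `X₀ ⟶ Y₁ ⟶ Y₂ ⟶ X₂` whose middle map comes from `Y`
and whose outer maps are identities or morphisms of `X` not in `W` whose relevant endpoint
lies in `W`. -/
theorem stmt_11 {W X Y Z : Cat} (F : W ⟶ X) (G : W ⟶ Y) (iX : X ⟶ Z) (iY : Y ⟶ Z)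
    (hpo : IsPushout F G iX iY)
    (hF_full : F.toFunctor.Full)
    (hF_injobj : Function.Injective F.toFunctor.obj)
    (hsieve : ∀ {x : ↑X} {w : ↑W} (_ : x ⟶ F.toFunctor.obj w), ∃ w' : ↑W, F.toFunctor.obj w' = x) :
    Function.Bijective
      (Sum.elim iY.toFunctor.obj (fun x : {x : ↑X // x ∉ Set.range F.toFunctor.obj} => iX.toFunctor.obj x.1)) ∧
    ∀ {z z' : ↑Z} (φ : z ⟶ z'),
      (∃ (x x' : ↑X) (ψ : x ⟶ x') (hx : iX.toFunctor.obj x = z) (hx' : iX.toFunctor.obj x' = z'),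
        ¬ InImage F ψ ∧ φ = eqToHom hx.symm ≫ iX.toFunctor.map ψ ≫ eqToHom hx') ∨
      (∃ (y₁ y₂ : ↑Y) (d : y₁ ⟶ y₂) (α : z ⟶ iY.toFunctor.obj y₁) (β : iY.toFunctor.obj y₂ ⟶ z'),
        φ = α ≫ iY.toFunctor.map d ≫ β ∧
        ((∃ h : z = iY.toFunctor.obj y₁, α = eqToHom h) ∨
          (∃ (w₁ : ↑W) (hy₁ : y₁ = G.toFunctor.obj w₁) (x₀ : ↑X) (f₁ : x₀ ⟶ F.toFunctor.obj w₁)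
            (hz : iX.toFunctor.obj x₀ = z), ¬ InImage F f₁ ∧
            α = eqToHom hz.symm ≫ iX.toFunctor.map f₁ ≫
              eqToHom (show iX.toFunctor.obj (F.toFunctor.obj w₁) = iY.toFunctor.obj y₁ by
                rw [hy₁]; exact Functor.congr_obj (congrArg Cat.Hom.toFunctor hpo.w) w₁))) ∧
        ((∃ h : iY.toFunctor.obj y₂ = z', β = eqToHom h) ∨
          (∃ (w₂ : ↑W) (hy₂ : y₂ = G.toFunctor.obj w₂) (x₂ : ↑X) (f₂ : F.toFunctor.obj w₂ ⟶ x₂)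
            (hz' : iX.toFunctor.obj x₂ = z'), ¬ InImage F f₂ ∧
            β = eqToHom (show iY.toFunctor.obj y₂ = iX.toFunctor.obj (F.toFunctor.obj w₂) by
                rw [hy₂]; exact (Functor.congr_obj (congrArg Cat.Hom.toFunctor hpo.w) w₂).symm) ≫
              iX.toFunctor.map f₂ ≫ eqToHom hz'))) := by
  have hF : SievePushout.IsFullSieve F := ⟨hF_full, hF_injobj, hsieve⟩
  refine ⟨?_, fun {z z'} φ => ?_⟩
  · exact SievePushout.Model.bijective_sumElim_obj hpo hF
  obtain ⟨a, b, rfl, rfl, ⟨g, hg⟩, rfl⟩ := SievePushout.Model.exists_eq_forget_map hpo hF φ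
  rcases a with y | x <;> rcases b with y' | x'
  · obtain ⟨e, rfl⟩ := hg
    exact Or.inr ⟨y, y', e, 𝟙 _, 𝟙 _, by simp, .inl ⟨rfl, rfl⟩, .inl ⟨rfl, rfl⟩⟩
  · obtain ⟨w, d, f, h, rfl⟩ := hg
    exact Or.inr ⟨y, G.toFunctor.obj w, d, 𝟙 _, eqToHom h ≫ iX.toFunctor.map f, by simp,
      .inl ⟨rfl, rfl⟩,
      .inr ⟨w, rfl, x'.1, f, rfl, SievePushout.not_inImage_of_not_mem_range F f x'.2,
        by simp⟩⟩
  · exact hg.elim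
  · obtain ⟨ψ, rfl⟩ := hg
    exact Or.inl
      ⟨x.1, x'.1, ψ, rfl, rfl, SievePushout.not_inImage_of_not_mem_range F ψ x'.2, by simp⟩
end

section
/- For a crossed simplicial group ΔG, the free functor i_! : sSet → ΔG-Set given by i_!(X)_n = Aut_{ΔG}([n]) × X_n, with faces d_i(g,x) = (d_i g, d_{g^{-1}(i)} x) and degeneracies s_i(g,x) = (s_i g, s_{g^{-1}(i)} x), is left adjoint to the forgetful functor i* : ΔG-Set → sSet that forgets the ΔG-action. -/
open CategoryTheory Opposite

/-- A crossed simplicial group structure: a category `G` with an embedding of the simplex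
category which is bijective on objects, such that every morphism `i[m] ⟶ i[n]` factors
uniquely as `i(φ) ∘ g` with `φ : [m] ⟶ [n]` in `Δ` and `g` an automorphism of `i[m]`. -/
structure CrossedSimplicialGroup (G : Type) [SmallCategory G] where
  i : SimplexCategory ⥤ G
  faithful : i.Faithful
  bij_obj : Function.Bijective i.obj
  factor : ∀ {m n : SimplexCategory} (u : i.obj m ⟶ i.obj n),
    ∃! p : (m ⟶ n) × (i.obj m ≅ i.obj m), u = p.2.hom ≫ i.map p.1

/-- The crossed action: the unique factorisation of `i(φ) ≫ g` as an automorphism of `i[m]`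
followed by a morphism of `Δ` (this encodes the formulas `d_i(g)` and `g⁻¹(i)`). -/
noncomputable def gAct {G : Type} [SmallCategory G] (S : CrossedSimplicialGroup G)
    {m n : SimplexCategory} (φ : m ⟶ n) (g : Aut (S.i.obj n)) :
    (m ⟶ n) × (S.i.obj m ≅ S.i.obj m) :=
  (S.factor (S.i.map φ ≫ g.hom)).exists.choose

/-!
A map `α : i_! X ⟶ Y` is determined by its values `α(1, x)`, because `(g, x)` is the image of
`(1, x)` under the automorphism `g`. Conversely, a simplicial map `β : X ⟶ i^* Y` extends by
`(g, x) ↦ g^* β(x)`; this is natural for all of `ΔG` because every morphism of `ΔG` factors as an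
automorphism followed by a morphism of `Δ`, and the crossed action on `i_! X` is exactly the one
that makes both factors commute with the extension. As `i` is bijective on objects, naturality on
the objects `i[n]` suffices.
-/

namespace CategoryTheory.NatTrans

variable {C D E : Type*} [Category D] [Category E] {p : C → D}

lemma isEquivalence_inducedFunctor (hp : p.Surjective) : (inducedFunctor p).IsEquivalence :=
  { essSurj := Functor.essSurj_of_surj hp }

noncomputable def ofSurjective (hp : p.Surjective) {F F' : D ⥤ E}
    (τ : ∀ c, F.obj (p c) ⟶ F'.obj (p c))
    (hτ : ∀ c c' (f : p c ⟶ p c'), F.map f ≫ τ c' = τ c ≫ F'.map f) : F ⟶ F' :=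
  haveI := isEquivalence_inducedFunctor hp
  ((Functor.whiskeringLeft _ _ E).obj (inducedFunctor p)).preimage
    { app := τ, naturality := fun c c' f => hτ c c' f.hom }

lemma ofSurjective_app (hp : p.Surjective) {F F' : D ⥤ E}
    (τ : ∀ c, F.obj (p c) ⟶ F'.obj (p c))
    (hτ : ∀ c c' (f : p c ⟶ p c'), F.map f ≫ τ c' = τ c ≫ F'.map f) (c : C) :
    (ofSurjective hp τ hτ).app (p c) = τ c :=
  haveI := isEquivalence_inducedFunctor hp
  congr_app (((Functor.whiskeringLeft _ _ E).obj (inducedFunctor p)).map_preimage _) c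

end CategoryTheory.NatTrans

namespace CrossedSimplicialGroup

section

variable {G : Type} [SmallCategory G] (S : CrossedSimplicialGroup G)

lemma map_comp_gAct {m n : SimplexCategory} (φ : m ⟶ n) (g : Aut (S.i.obj n)) :
    S.i.map φ ≫ g.hom = (gAct S φ g).2.hom ≫ S.i.map (gAct S φ g).1 :=
  (S.factor _).exists.choose_spec

lemma gAct_one {m n : SimplexCategory} (φ : m ⟶ n) : gAct S φ 1 = (φ, Iso.refl _) :=
  (S.factor _).unique (S.map_comp_gAct φ 1) ((Category.comp_id _).trans (Category.id_comp _).symm)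

lemma op_obj_surjective : Function.Surjective fun n => op (S.i.obj n) :=
  fun c => (S.bij_obj.2 c.unop).imp fun _ h => congrArg op h

end

section

variable {G : Type} [SmallCategory G] {S : CrossedSimplicialGroup G} {L : SSet ⥤ (Gᵒᵖ ⥤ Type)}
  (e : ∀ (X : SSet) (n : SimplexCategory),
    (L.obj X).obj (op (S.i.obj n)) ≃ Aut (S.i.obj n) × X.obj (op n))
  (hnat : ∀ {X X' : SSet} (φ : X ⟶ X') (n : SimplexCategory)
    (z : (L.obj X).obj (op (S.i.obj n))),
    e X' n ((L.map φ).app (op (S.i.obj n)) z) = ((e X n z).1, φ.app (op n) (e X n z).2))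
  (hmap : ∀ (X : SSet) {m n : SimplexCategory} (φ : m ⟶ n)
    (z : (L.obj X).obj (op (S.i.obj n))),
    e X m ((L.obj X).map (S.i.map φ).op z) =
      ((gAct S φ (e X n z).1).2, X.map ((gAct S φ (e X n z).1).1).op (e X n z).2))
  (hAut : ∀ (X : SSet) (n : SimplexCategory) (θ : Aut (S.i.obj n))
    (z : (L.obj X).obj (op (S.i.obj n))),
    e X n ((L.obj X).map θ.hom.op z) = (θ ≪≫ (e X n z).1, (e X n z).2))

include hmap in
lemma map_symm_one (X : SSet) {m n : SimplexCategory} (φ : m ⟶ n) (x : X.obj (op n)) :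
    (L.obj X).map (S.i.map φ).op ((e X n).symm (1, x)) = (e X m).symm (1, X.map φ.op x) := by
  rw [Equiv.eq_symm_apply, hmap, Equiv.apply_symm_apply, gAct_one]
  rfl

include hmap in
def restrictHom {X : SSet} {Y : Gᵒᵖ ⥤ Type} (α : L.obj X ⟶ Y) : X ⟶ S.i.op ⋙ Y where
  app n := TypeCat.ofHom fun x => α.app (op (S.i.obj n.unop)) ((e X n.unop).symm (1, x))
  naturality m m' f := by
    ext x
    change α.app _ ((e X _).symm (1, X.map f.unop.op x)) =
      Y.map (S.i.map f.unop).op (α.app _ ((e X _).symm (1, x)))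
    rw [← map_symm_one e hmap]
    exact ConcreteCategory.congr_hom (α.naturality (S.i.map f.unop).op) _

def extendApp {X : SSet} {Y : Gᵒᵖ ⥤ Type} (β : X ⟶ S.i.op ⋙ Y) (n : SimplexCategory)
    (z : (L.obj X).obj (op (S.i.obj n))) : Y.obj (op (S.i.obj n)) :=
  Y.map (e X n z).1.hom.op (β.app (op n) (e X n z).2)

include hAut in
lemma extendApp_map_aut {X : SSet} {Y : Gᵒᵖ ⥤ Type} (β : X ⟶ S.i.op ⋙ Y)
    {n : SimplexCategory} (θ : Aut (S.i.obj n)) (z : (L.obj X).obj (op (S.i.obj n))) :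
    extendApp e β n ((L.obj X).map θ.hom.op z) = Y.map θ.hom.op (extendApp e β n z) := by
  rw [extendApp, extendApp, hAut, ← Functor.map_comp_apply]
  rfl

include hmap in
lemma extendApp_map_i {X : SSet} {Y : Gᵒᵖ ⥤ Type} (β : X ⟶ S.i.op ⋙ Y)
    {m n : SimplexCategory} (φ : m ⟶ n) (z : (L.obj X).obj (op (S.i.obj n))) :
    extendApp e β m ((L.obj X).map (S.i.map φ).op z) =
      Y.map (S.i.map φ).op (extendApp e β n z) := by
  set g := (e X n z).1
  have hβ : β.app (op m) (X.map (gAct S φ g).1.op (e X n z).2) =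
      Y.map (S.i.map (gAct S φ g).1).op (β.app (op n) (e X n z).2) :=
    ConcreteCategory.congr_hom (β.naturality (gAct S φ g).1.op) _
  rw [extendApp, extendApp, hmap, hβ, ← Functor.map_comp_apply,
    ← Functor.map_comp_apply, ← op_comp, ← op_comp, ← map_comp_gAct]

include hmap hAut in
lemma extendApp_map {X : SSet} {Y : Gᵒᵖ ⥤ Type} (β : X ⟶ S.i.op ⋙ Y)
    {m n : SimplexCategory} (v : S.i.obj m ⟶ S.i.obj n) (z : (L.obj X).obj (op (S.i.obj n))) :
    extendApp e β m ((L.obj X).map v.op z) = Y.map v.op (extendApp e β n z) := by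
  obtain ⟨⟨φ, θ⟩, rfl : v = θ.hom ≫ S.i.map φ, -⟩ := S.factor v
  rw [op_comp, Functor.map_comp_apply, Functor.map_comp_apply,
    extendApp_map_aut e hAut β (θ : Aut _), extendApp_map_i e hmap]

include hmap hAut in
noncomputable def extendHom {X : SSet} {Y : Gᵒᵖ ⥤ Type} (β : X ⟶ S.i.op ⋙ Y) : L.obj X ⟶ Y :=
  NatTrans.ofSurjective S.op_obj_surjective (fun n => TypeCat.ofHom (extendApp e β n))
    fun _ _ f => by ext z; exact extendApp_map e hmap hAut β f.unop z

lemma extendHom_app {X : SSet} {Y : Gᵒᵖ ⥤ Type} (β : X ⟶ S.i.op ⋙ Y) (n : SimplexCategory)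
    (z : (L.obj X).obj (op (S.i.obj n))) :
    (extendHom e hmap hAut β).app (op (S.i.obj n)) z = extendApp e β n z := by
  rw [extendHom, NatTrans.ofSurjective_app]
  rfl

lemma restrictHom_extendHom {X : SSet} {Y : Gᵒᵖ ⥤ Type} (β : X ⟶ S.i.op ⋙ Y) :
    restrictHom e hmap (extendHom e hmap hAut β) = β := by
  ext n x
  change (extendHom e hmap hAut β).app _ _ = _
  rw [extendHom_app, extendApp, Equiv.apply_symm_apply]
  exact Functor.map_id_apply Y _ _

lemma extendHom_restrictHom {X : SSet} {Y : Gᵒᵖ ⥤ Type} (α : L.obj X ⟶ Y) :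
    extendHom e hmap hAut (restrictHom e hmap α) = α := by
  ext c z
  obtain ⟨n, rfl⟩ := S.op_obj_surjective c
  have hz : (L.obj X).map (e X n z).1.hom.op ((e X n).symm (1, (e X n z).2)) = z := by
    rw [← (e X n).apply_eq_iff_eq, hAut, Equiv.apply_symm_apply]
    exact Prod.ext (Iso.trans_refl _) rfl
  change (extendHom e hmap hAut _).app (op (S.i.obj n)) z = α.app (op (S.i.obj n)) z
  rw [extendHom_app, extendApp]
  conv_rhs => rw [← hz]
  exact (ConcreteCategory.congr_hom (α.naturality _) _).symm

noncomputable def homEquiv (X : SSet) (Y : Gᵒᵖ ⥤ Type) : (L.obj X ⟶ Y) ≃ (X ⟶ S.i.op ⋙ Y) where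
  toFun := restrictHom e hmap
  invFun := extendHom e hmap hAut
  left_inv := extendHom_restrictHom e hmap hAut
  right_inv := restrictHom_extendHom e hmap hAut

include hnat in
lemma homEquiv_comp {X' X : SSet} {Y : Gᵒᵖ ⥤ Type} (f : X' ⟶ X) (α : L.obj X ⟶ Y) :
    homEquiv e hmap hAut X' Y (L.map f ≫ α) = f ≫ homEquiv e hmap hAut X Y α := by
  ext n x
  change α.app _ ((L.map f).app _ _) = α.app _ ((e X n.unop).symm (1, f.app n x))
  refine congrArg (α.app _) ((e X n.unop).injective ?_)
  rw [hnat, Equiv.apply_symm_apply, Equiv.apply_symm_apply]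

end

end CrossedSimplicialGroup

open CrossedSimplicialGroup in
/-- For a crossed simplicial group `ΔG`, the free functor `i_! : sSet ⥤ ΔG-Set` with
`i_!(X)_n = Aut_{ΔG}([n]) × X_n`, automorphisms acting by left multiplication and the
simplicial operators acting through the crossed-group factorisation (the formulas
`d_i(g, x) = (d_i g, d_{g⁻¹(i)} x)` and `s_i(g, x) = (s_i g, s_{g⁻¹(i)} x)`), is left
adjoint to the forgetful functor `i^* : ΔG-Set ⥤ sSet`. -/
theorem stmt_14 {G : Type} [SmallCategory G] (S : CrossedSimplicialGroup G)
    (L : SSet ⥤ (Gᵒᵖ ⥤ Type))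
    (e : ∀ (X : SSet) (n : SimplexCategory),
      (L.obj X).obj (op (S.i.obj n)) ≃ Aut (S.i.obj n) × X.obj (op n))
    (hnat : ∀ {X X' : SSet} (φ : X ⟶ X') (n : SimplexCategory)
      (z : (L.obj X).obj (op (S.i.obj n))),
      e X' n ((L.map φ).app (op (S.i.obj n)) z) = ((e X n z).1, φ.app (op n) (e X n z).2))
    (hmap : ∀ (X : SSet) {m n : SimplexCategory} (φ : m ⟶ n)
      (z : (L.obj X).obj (op (S.i.obj n))),
      e X m ((L.obj X).map (S.i.map φ).op z) =
        ((gAct S φ (e X n z).1).2, X.map ((gAct S φ (e X n z).1).1).op (e X n z).2))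
    (hAut : ∀ (X : SSet) (n : SimplexCategory) (θ : Aut (S.i.obj n))
      (z : (L.obj X).obj (op (S.i.obj n))),
      e X n ((L.obj X).map θ.hom.op z) = (θ ≪≫ (e X n z).1, (e X n z).2)) :
    Nonempty (L ⊣ (Functor.whiskeringLeft SimplexCategoryᵒᵖ Gᵒᵖ Type).obj S.i.op) :=
  ⟨Adjunction.mkOfHomEquiv
    { homEquiv := homEquiv e hmap hAut
      homEquiv_naturality_left_symm := fun f g => (Equiv.symm_apply_eq _).2 <| by
        rw [homEquiv_comp e hnat, Equiv.apply_symm_apply]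
      homEquiv_naturality_right := fun _ _ => rfl }⟩
end

section
/- For a crossed simplicial group ΔG, the pushout-product of two normal monomorphisms of ΔG-sets is a normal monomorphism: given cofibrations f : X → Y and f' : X' → Y', the map (X × Y') ⊔_{X × X'} (Y × X') → Y × Y' is a normal monomorphism; moreover the pushout inclusions X × Y' → P and Y × X' → P are normal monomorphisms. -/
/-!
Presheaf categories are adhesive, so both pushout inclusions are monic, and since the square formed
by `f ⨯ 𝟙` and `𝟙 ⨯ f'` is a pullback, the pushout-product map is monic as well. Freeness passes
backwards along natural maps: if a natural `u` sends every point outside the image of `v` to a point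
outside the image of `f`, an automorphism fixing a point outside the image of `v` also fixes its
image under `u`, hence is trivial. For `inl` take for `u` the second component of the
pushout-product map (against `f'`), for `inr` its first component (against `f`), and for the
pushout-product map the first projection of `Y ⨯ Y'` (against `f`); the image conditions are read
off pullback squares of products.
-/

open CategoryTheory CategoryTheory.Limits Opposite

variable {G : Type} [SmallCategory G]

/-- A normal monomorphism of `ΔG`-sets: a monomorphism `f : X ⟶ Y` such that for every
object `c` the automorphism group of `c` acts freely on `Y(c) \ f(X(c))`. -/
def CrossedNormalMono {X Y : Gᵒᵖ ⥤ Type} (f : X ⟶ Y) : Prop :=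
  Mono f ∧ ∀ (c : G) (y : Y.obj (op c)), y ∉ Set.range (f.app (op c)) →
    ∀ g : c ≅ c, Y.map g.hom.op y = y → g = Iso.refl c

namespace CategoryTheory

variable {C : Type*} [Category C]

lemma IsPullback.of_prod_snd_with_id [HasBinaryProducts C] {A B : C} (f : A ⟶ B) (X : C) :
    IsPullback prod.snd (prod.map (𝟙 X) f) f prod.snd :=
  (IsPullback.of_prod_fst_with_id f X).of_iso (prod.braiding A X) (Iso.refl _)
    (prod.braiding B X) (Iso.refl _) (by simp [prod.lift_snd]) (by simp) (by simp)
    (by simp [prod.lift_snd])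

lemma IsPullback.prod_map_id [HasBinaryProducts C] {X Y X' Y' : C} (f : X ⟶ Y)
    (f' : X' ⟶ Y') :
    IsPullback (prod.map f (𝟙 X')) (prod.map (𝟙 X) f') (prod.map (𝟙 Y) f')
      (prod.map f (𝟙 Y')) :=
  IsPullback.of_right (by simpa using IsPullback.of_prod_snd_with_id f' X) (by simp)
    (IsPullback.of_prod_snd_with_id f' Y)

lemma Adhesive.mono_pushout_desc_of_isPullback [Adhesive C] {W A B Z : C} {t : W ⟶ A}
    {l : W ⟶ B} {r : A ⟶ Z} {b : B ⟶ Z} [Mono r] [Mono b] [HasPushout t l]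
    (h : IsPullback t l r b) : Mono (pushout.desc r b h.w) := by
  have hP : IsPushout (pullback.fst r b) (pullback.snd r b) (pushout.inl t l)
      (pushout.inr t l) :=
    (IsPushout.of_hasPushout t l).of_iso h.isoPullback (Iso.refl _) (Iso.refl _) (Iso.refl _)
      (by simp) (by simp) (by simp) (by simp)
  have : pushout.desc r b h.w = hP.isoPushout.hom ≫ pushout.desc r b pullback.condition := by
    ext <;> simp [pushout.inl_desc, pushout.inr_desc]
  rw [this]
  infer_instance

namespace FunctorToTypes

universe w

variable {W A B Z : C ⥤ Type w} {t : W ⟶ A} {l : W ⟶ B} {r : A ⟶ Z}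
  {b : B ⟶ Z} {c : C}

lemma mem_range_of_isPullback (h : IsPullback t l r b) {x : B.obj c}
    (hx : b.app c x ∈ Set.range (r.app c)) : x ∈ Set.range (l.app c) := by
  obtain ⟨a, ha⟩ := hx
  obtain ⟨w, -, hw⟩ := Types.exists_of_isPullback (h.map ((evaluation _ _).obj c)) a x ha
  exact ⟨w, hw⟩

lemma mem_range_or_of_isPushout (h : IsPushout t l r b) (p : Z.obj c) :
    p ∈ Set.range (r.app c) ∨ p ∈ Set.range (b.app c) :=
  Types.eq_or_eq_of_isPushout (h.map ((evaluation _ _).obj c)) p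

lemma mem_range_of_isPushout_of_isPullback (hP : IsPushout t l r b) {V T : C ⥤ Type w}
    {s : W ⟶ V} {e : V ⟶ T} {g : B ⟶ T} (hpb : IsPullback s l e g) {u : Z ⟶ T} (hu : b ≫ u = g)
    {p : Z.obj c} (hp : u.app c p ∈ Set.range (e.app c)) : p ∈ Set.range (r.app c) := by
  rcases mem_range_or_of_isPushout hP p with hr | ⟨y, rfl⟩
  · exact hr
  · rw [← NatTrans.comp_app_apply, hu] at hp
    obtain ⟨w, rfl⟩ := mem_range_of_isPullback hpb hp
    exact ⟨t.app c w, by rw [← NatTrans.comp_app_apply, hP.w, NatTrans.comp_app_apply]⟩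

end FunctorToTypes

end CategoryTheory

lemma CrossedNormalMono.of_preimage_range_subset {X Y Z W : Gᵒᵖ ⥤ Type} {f : X ⟶ Y}
    (hf : CrossedNormalMono f) (u : Z ⟶ Y) (v : W ⟶ Z) [Mono v]
    (h : ∀ c, u.app c ⁻¹' Set.range (f.app c) ⊆ Set.range (v.app c)) : CrossedNormalMono v :=
  ⟨inferInstance, fun c z hz g hg ↦ hf.2 c (u.app _ z) (fun hu ↦ hz (h _ hu)) g
    (by rw [← NatTrans.naturality_apply, hg])⟩

/-- For a crossed simplicial group, the pushout-product (with respect to the cartesian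
product) of two normal monomorphisms `f : X ⟶ Y`, `f' : X' ⟶ Y'` of `ΔG`-sets is a normal
monomorphism, and moreover the two pushout inclusions `X ⨯ Y' ⟶ P` and `Y ⨯ X' ⟶ P` are
normal monomorphisms. -/
theorem stmt_19
    {X Y X' Y' : Gᵒᵖ ⥤ Type} (f : X ⟶ Y) (f' : X' ⟶ Y')
    (hf : CrossedNormalMono f) (hf' : CrossedNormalMono f') :
    CrossedNormalMono (pushout.inl (prod.map f (𝟙 X')) (prod.map (𝟙 X) f')) ∧
    CrossedNormalMono (pushout.inr (prod.map f (𝟙 X')) (prod.map (𝟙 X) f')) ∧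
    CrossedNormalMono (pushout.desc (prod.map (𝟙 Y) f') (prod.map f (𝟙 Y'))
      (by simp [prod.map_map] :
        prod.map f (𝟙 X') ≫ prod.map (𝟙 Y) f' = prod.map (𝟙 X) f' ≫ prod.map f (𝟙 Y'))) := by
  have := hf.1
  have := hf'.1
  have hP := IsPushout.of_hasPushout (prod.map f (𝟙 X')) (prod.map (𝟙 X) f')
  have hpb := IsPullback.prod_map_id f f'
  have := Adhesive.mono_of_isPushout_of_mono_right hP
  have := Adhesive.mono_of_isPushout_of_mono_left hP
  have := Adhesive.mono_pushout_desc_of_isPullback hpb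
  refine ⟨hf'.of_preimage_range_subset (pushout.desc _ _ hpb.w ≫ prod.snd) _ fun c p hp ↦ ?_,
    hf.of_preimage_range_subset (pushout.desc _ _ hpb.w ≫ prod.fst) _ fun c p hp ↦ ?_,
    hf.of_preimage_range_subset prod.fst _ fun c z hz ↦ ?_⟩
  · exact FunctorToTypes.mem_range_of_isPushout_of_isPullback hP
      (IsPullback.of_prod_snd_with_id f' X) (by simp [pushout.inr_desc_assoc]) hp
  · exact FunctorToTypes.mem_range_of_isPushout_of_isPullback hP.flip
      (IsPullback.of_prod_fst_with_id f X') (by simp [pushout.inl_desc_assoc]) hp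
  · obtain ⟨w, rfl⟩ :=
      FunctorToTypes.mem_range_of_isPullback (IsPullback.of_prod_fst_with_id f Y') hz
    exact ⟨(pushout.inr (prod.map f (𝟙 X')) (prod.map (𝟙 X) f')).app c w,
      by rw [← NatTrans.comp_app_apply, pushout.inr_desc]⟩
end
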